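/- The periodic defocusing Ablowitz-Ladik equation −i α̇_j = ρ_j²(α_{j+1} + α_{j-1}) − 2α_j (indices mod p) is the Hamiltonian flow of H = 2 Re(K_1) − 2 log(K_0) with respect to the Ablowitz-Ladik Poisson bracket, i.e. α̇_j = {α_j, H} gives exactly this equation. -/

import Mathlib

/-!
The coordinate `α_j` is holomorphic with `∂α_j/∂α_k = δ_jk`, so the bracket collapses to
`{α_j, H} = -i ρ_j² ∂H/∂ᾱ_j`. For real-valued `H`, `∂H/∂ᾱ_j` is half the gradient of `H` in
the `j`-th coordinate (identifying `ℂ` with `ℝ²`), and differentiating `2 Re K_1` and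
`-2 log K_0` gives `∂H/∂ᾱ_j = 2α_j/ρ_j² - (α_{j+1} + α_{j-1})`. Multiplying by `-ρ_j²` yields
the equation.
-/

open scoped ComplexConjugate

variable {ι : Type*} [Fintype ι] [DecidableEq ι]

/-- The Wirtinger derivative `∂f/∂α_j = (∂f/∂u_j - i ∂f/∂v_j)/2` of a function
of finitely many complex variables `α_j = u_j + i v_j`. -/
noncomputable def wirtD (f : (ι → ℂ) → ℂ) (x : ι → ℂ) (j : ι) : ℂ :=
  (fderiv ℝ f x (Pi.single j 1) - Complex.I * fderiv ℝ f x (Pi.single j Complex.I)) / 2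

/-- The Wirtinger derivative `∂f/∂ᾱ_j = (∂f/∂u_j + i ∂f/∂v_j)/2`. -/
noncomputable def wirtDbar (f : (ι → ℂ) → ℂ) (x : ι → ℂ) (j : ι) : ℂ :=
  (fderiv ℝ f x (Pi.single j 1) + Complex.I * fderiv ℝ f x (Pi.single j Complex.I)) / 2

/-- The Ablowitz–Ladik Poisson bracket
`{f,g} = i Σ_j ρ_j² [ (∂f/∂ᾱ_j)(∂g/∂α_j) − (∂f/∂α_j)(∂g/∂ᾱ_j) ]`,
with `ρ_j² = 1 - |α_j|²`. -/
noncomputable def alPB (f g : (ι → ℂ) → ℂ) (x : ι → ℂ) : ℂ :=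
  Complex.I * ∑ j, ((1 - ‖x j‖ ^ 2 : ℝ) : ℂ) *
    (wirtDbar f x j * wirtD g x j - wirtD f x j * wirtDbar g x j)

open ContinuousLinearMap
open scoped RealInnerProductSpace

omit [Fintype ι] in
theorem wirtD_coord (x : ι → ℂ) (j k : ι) :
    wirtD (fun y => y j) x k = if k = j then 1 else 0 := by
  rw [wirtD, (hasFDerivAt_apply j x).fderiv]
  split_ifs with h <;> simp [h, Ne.symm]

omit [Fintype ι] in
theorem wirtDbar_coord (x : ι → ℂ) (j k : ι) : wirtDbar (fun y => y j) x k = 0 := by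
  rw [wirtDbar, (hasFDerivAt_apply j x).fderiv]
  by_cases h : k = j <;> simp [h, Ne.symm]

theorem alPB_coord_left (g : (ι → ℂ) → ℂ) (x : ι → ℂ) (j : ι) :
    alPB (fun y => y j) g x = -Complex.I * ((1 - ‖x j‖ ^ 2 : ℝ) : ℂ) * wirtDbar g x j := by
  rw [alPB, Fintype.sum_eq_single j fun k hk => by simp [wirtD_coord, wirtDbar_coord, hk]]
  simp only [wirtD_coord, wirtDbar_coord, if_true]
  ring

theorem wirtDbar_ofReal_eq {F : (ι → ℂ) → ℝ} {L : (ι → ℂ) →L[ℝ] ℝ} {x : ι → ℂ} {j : ι} {a : ℂ}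
    (hF : HasFDerivAt F L x) (hL : ∀ v, L (Pi.single j v) = 2 * ⟪a, v⟫) :
    wirtDbar (fun y => (F y : ℂ)) x j = a := by
  have hF' : HasFDerivAt (fun y => (F y : ℂ)) (Complex.ofRealCLM.comp L) x :=
    Complex.ofRealCLM.hasFDerivAt.comp x hF
  rw [wirtDbar, hF'.fderiv]
  apply Complex.ext <;> simp [hL, Complex.inner]

theorem one_sub_norm_sq_ne_zero {E : Type*} [SeminormedAddGroup E] {z : E} (hz : ‖z‖ ≠ 1) :
    1 - ‖z‖ ^ 2 ≠ 0 := by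
  have : 0 < 1 + ‖z‖ := by positivity
  rw [show 1 - ‖z‖ ^ 2 = (1 - ‖z‖) * (1 + ‖z‖) by ring]
  exact mul_ne_zero (sub_ne_zero.2 hz.symm) this.ne'

theorem hasFDerivAt_log_prod_one_sub_norm_sq {x : ι → ℂ} (hx : ∀ m, ‖x m‖ ≠ 1) :
    ∃ L : (ι → ℂ) →L[ℝ] ℝ, HasFDerivAt (fun y => Real.log (∏ m, (1 - ‖y m‖ ^ 2))) L x ∧
      ∀ j v, L (Pi.single j v) = -2 * ⟪x j, v⟫ / (1 - ‖x j‖ ^ 2) := by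
  have hρ := fun m => one_sub_norm_sq_ne_zero (hx m)
  have hP := HasFDerivAt.finsetProd (u := Finset.univ)
    (fun m _ => ((hasFDerivAt_apply m x).norm_sq).const_sub 1)
  refine ⟨_, hP.log (Finset.prod_ne_zero_iff.2 fun m _ => hρ m), fun j v => ?_⟩
  simp only [smul_neg, Finset.sum_neg_distrib, neg_apply, smul_apply, sum_apply, comp_apply,
    proj_apply, coe_innerSL_apply, nsmul_eq_mul, Nat.cast_ofNat, smul_eq_mul]
  rw [Fintype.sum_eq_single j fun m hm => by simp [hm], Pi.single_eq_same,
    ← Finset.mul_prod_erase _ _ (Finset.mem_univ j)]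
  have := Finset.prod_ne_zero_iff.2 fun m (_ : m ∈ Finset.univ.erase j) => hρ m
  field_simp

theorem hasFDerivAt_re_sum_mul_conj_perm (σ : Equiv.Perm ι) (x : ι → ℂ) :
    ∃ L : (ι → ℂ) →L[ℝ] ℝ, HasFDerivAt (fun y => (∑ m, y (σ m) * conj (y m)).re) L x ∧
      ∀ j v, L (Pi.single j v) = ⟪x (σ.symm j) + x (σ j), v⟫ := by
  have hK := HasFDerivAt.fun_sum (u := Finset.univ) fun m _ =>
    (hasFDerivAt_apply (σ m) x).mul
      ((Complex.conjCLE : ℂ →L[ℝ] ℂ).hasFDerivAt.comp x (hasFDerivAt_apply m x))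
  refine ⟨_, Complex.reCLM.hasFDerivAt.comp x hK, fun j v => ?_⟩
  have h1 : ∑ m, x (σ m) * conj ((Pi.single j v : ι → ℂ) m) = x (σ j) * conj v := by
    rw [Fintype.sum_eq_single j fun m hm => by simp [hm], Pi.single_eq_same]
  have h2 : ∑ m, conj (x m) * (Pi.single j v : ι → ℂ) (σ m) = conj (x (σ.symm j)) * v := by
    refine (Fintype.sum_eq_single (σ.symm j) fun m hm => ?_).trans ?_
    · rw [Pi.single_eq_of_ne (fun h => hm (σ.eq_symm_apply.2 h)), mul_zero]
    · rw [σ.apply_symm_apply, Pi.single_eq_same]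
  simp only [comp_apply, sum_apply, add_apply, smul_apply, proj_apply, smul_eq_mul,
    Finset.sum_add_distrib, ContinuousLinearEquiv.coe_coe, Complex.conjCLE_apply,
    Function.comp_apply, h1, h2, Complex.reCLM_apply]
  simp only [inner_add_left, Complex.inner, Complex.add_re, Complex.mul_re, Complex.conj_re,
    Complex.conj_im]
  ring

section AblowitzLadik

variable (p : ℕ) [NeZero p]

noncomputable def alHamiltonian (y : ZMod p → ℂ) : ℝ :=
  2 * (-∑ m : ZMod p, y (m - 1) * conj (y m)).re - 2 * Real.log (∏ m : ZMod p, (1 - ‖y m‖ ^ 2))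

theorem hasFDerivAt_alHamiltonian {x : ZMod p → ℂ} (hx : ∀ m, ‖x m‖ ≠ 1) :
    ∃ L : (ZMod p → ℂ) →L[ℝ] ℝ, HasFDerivAt (alHamiltonian p) L x ∧ ∀ j v,
      L (Pi.single j v) = 2 * ⟪(2 / (1 - ‖x j‖ ^ 2) : ℝ) • x j - (x (j + 1) + x (j - 1)), v⟫ := by
  obtain ⟨LK, hK, hLK⟩ := hasFDerivAt_re_sum_mul_conj_perm (Equiv.subRight (1 : ZMod p)) x
  obtain ⟨LP, hP, hLP⟩ := hasFDerivAt_log_prod_one_sub_norm_sq hx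
  refine ⟨(-2 : ℝ) • LK - (2 : ℝ) • LP, ?_, fun j v => ?_⟩
  · have e : alHamiltonian p = fun y =>
        -2 * (∑ m, y (Equiv.subRight 1 m) * conj (y m)).re
          - 2 * Real.log (∏ m, (1 - ‖y m‖ ^ 2)) := by
      funext y
      simp [alHamiltonian]
    rw [e]
    exact (hK.const_mul (-2)).sub (hP.const_mul 2)
  · have hρ := one_sub_norm_sq_ne_zero (hx j)
    simp only [sub_apply, smul_apply, smul_eq_mul, hLK, hLP,
      inner_sub_left, real_inner_smul_left, Equiv.subRight_apply, Equiv.subRight_symm_apply]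
    field_simp
    ring

end AblowitzLadik

/-- The periodic defocusing Ablowitz–Ladik equation
`−i α̇_j = ρ_j²(α_{j+1} + α_{j-1}) − 2α_j` (indices mod `p`) is the Hamiltonian
flow of `H = 2 Re(K_1) − 2 log(K_0)` for the Ablowitz–Ladik Poisson bracket,
where `K_1 = −Σ_j α_{j-1} conj(α_j)` and `K_0 = ∏_j (1 - |α_j|²)`: the
substitution `α̇_j = {α_j, H}` gives exactly this equation. -/
theorem alPB_AL_hamiltonian_flow (p : ℕ) [NeZero p] (x : ZMod p → ℂ)
    (hx : ∀ j, ‖x j‖ < 1) (j : ZMod p) :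
    -Complex.I * alPB (fun y => y j)
        (fun y => ((2 * (-∑ m : ZMod p, y (m - 1) * conj (y m)).re
            - 2 * Real.log (∏ m : ZMod p, (1 - ‖y m‖ ^ 2)) : ℝ) : ℂ)) x
      = ((1 - ‖x j‖ ^ 2 : ℝ) : ℂ) * (x (j + 1) + x (j - 1)) - 2 * x j := by
  obtain ⟨L, hH, hL⟩ := hasFDerivAt_alHamiltonian p fun m => (hx m).ne
  have hρ : (1 - (‖x j‖ : ℂ) ^ 2) ≠ 0 := by exact_mod_cast one_sub_norm_sq_ne_zero (hx j).ne
  show -Complex.I * alPB (fun y => y j) (fun y => (alHamiltonian p y : ℂ)) x = _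
  rw [alPB_coord_left, wirtDbar_ofReal_eq hH (hL j), Complex.real_smul]
  push_cast
  field_simp
  rw [Complex.I_sq]
  ring
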